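/- Let c : ℝ → Quaternion ℝ be a curve with c(0) = 1, taking values in the unit quaternions (‖c(t)‖ = 1 for all t), and having derivative ξ at 0 (HasDerivAt c ξ 0). Then the curve t ↦ c(t) · i · star(c(t)) has derivative ξ·i − i·ξ = [ξ, i] at 0. (This is the computation of the tangent map τ_* of the embedding τ : ℂP¹ → Im ℍ, qU₁ ↦ q i q⁻¹, at the base point: τ_*(ξ x₀) = [ξ, i].) -/

import Mathlib

/-!
Differentiating `c t * star (c t) = 1` at `0` shows that the velocity `ξ` of a curve of unit
quaternions through `1` is imaginary, `star ξ = -ξ`. The product rule applied to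
`c t * i * star (c t)` gives the derivative `ξ i + i (star ξ)`, which is therefore `ξ i - i ξ`.
-/

/-- The imaginary unit quaternion `i`. -/
def qI : Quaternion ℝ := ⟨0, 1, 0, 0⟩

open Quaternion

instance Quaternion.instStarModuleReal : StarModule ℝ ℍ[ℝ] :=
  ⟨Quaternion.star_smul⟩

theorem Quaternion.mul_star_eq_one_of_norm_eq_one {q : ℍ[ℝ]} (hq : ‖q‖ = 1) :
    q * star q = 1 := by
  rw [self_mul_star, normSq_eq_norm_mul_self, hq, mul_one, coe_one]

section StarAlgebraCurve

variable {A : Type*} [NormedRing A] [NormedAlgebra ℝ A] [StarRing A] [StarModule ℝ A]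
  [ContinuousStar A] {c : ℝ → A} {ξ : A} {t₀ : ℝ}

theorem HasDerivAt.mul_const_mul_star (hc : HasDerivAt c ξ t₀) (a : A) :
    HasDerivAt (fun t => c t * a * star (c t)) (ξ * a * star (c t₀) + c t₀ * a * star ξ) t₀ :=
  (hc.mul_const a).mul hc.star

theorem HasDerivAt.mul_star_add_mul_star_eq_zero (hc : HasDerivAt c ξ t₀)
    (hunit : ∀ t, c t * star (c t) = 1) :
    ξ * star (c t₀) + c t₀ * star ξ = 0 := by
  have h : HasDerivAt (fun t => c t * star (c t)) _ t₀ := hc.mul hc.star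
  simp only [hunit] at h
  exact h.unique (hasDerivAt_const t₀ 1)

theorem HasDerivAt.star_eq_neg_of_mul_star_eq_one (hc : HasDerivAt c ξ t₀)
    (hunit : ∀ t, c t * star (c t) = 1) (hc₀ : c t₀ = 1) :
    star ξ = -ξ := by
  have h := hc.mul_star_add_mul_star_eq_zero hunit
  rw [hc₀, star_one, mul_one, one_mul] at h
  exact eq_neg_of_add_eq_zero_right h

end StarAlgebraCurve

/-- Tangent map of the embedding `τ : ℂP¹ → Im ℍ`, `qU₁ ↦ q i q⁻¹`, at the base
point: if `c` is a curve of unit quaternions with `c 0 = 1` and derivative `ξ`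
at `0`, then `t ↦ c t · i · star (c t)` has derivative `ξ i - i ξ = [ξ, i]`
at `0`. -/
theorem tangent_map_of_conjugation_embedding
    (c : ℝ → Quaternion ℝ) (ξ : Quaternion ℝ)
    (hc0 : c 0 = 1) (hunit : ∀ t : ℝ, ‖c t‖ = 1)
    (hder : HasDerivAt c ξ 0) :
    HasDerivAt (fun t : ℝ => c t * qI * star (c t)) (ξ * qI - qI * ξ) 0 := by
  have hskew : star ξ = -ξ := hder.star_eq_neg_of_mul_star_eq_one
    (fun t => mul_star_eq_one_of_norm_eq_one (hunit t)) hc0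
  refine (hder.mul_const_mul_star qI).congr_deriv ?_
  rw [hc0, hskew, star_one]
  noncomm_ring
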